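/- With the same black brane thermodynamic quantities and the canonical-ensemble Euclidean action Ĩ = −(βV/16π)·(r₊^{2n−2} − (2n−3)q²ℓ²)/(r₊^{n−2}ℓ²), the Helmholtz free energy F = Ĩ/β + ΩJ satisfies F = M − TS as an identity among the explicit functions of (r₊, a, q). -/

import Mathlib

/-!
Since `Ξ² = 1 + a²/ℓ²`, the rotation drops out of both sides: `M - ΩJ = (V/16π)(n-1) m`, and in
`TS` the factor `Ξ` of the entropy cancels the `1/Ξ` of the temperature. What remains is an identity
of rational functions in `r₊ⁿ⁻²` and `r₊²ⁿ⁻² = r₊ⁿ · r₊ⁿ⁻²`.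
-/

noncomputable def Xi (ℓ a : ℝ) : ℝ := Real.sqrt (1 + a ^ 2 / ℓ ^ 2)

noncomputable def mMass (n : ℕ) (ℓ r q : ℝ) : ℝ := r ^ n / ℓ ^ 2 + q ^ 2 / r ^ (n - 2)

noncomputable def Mmass (n : ℕ) (ℓ V r a q : ℝ) : ℝ :=
  V / (16 * Real.pi) * mMass n ℓ r q * ((n : ℝ) * (Xi ℓ a) ^ 2 - 1)

noncomputable def Sent (n : ℕ) (ℓ V r a : ℝ) : ℝ := Xi ℓ a * V / 4 * r ^ (n - 1)

noncomputable def Jang (n : ℕ) (ℓ V r a q : ℝ) : ℝ :=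
  V / (16 * Real.pi) * (n : ℝ) * Xi ℓ a * mMass n ℓ r q * a

noncomputable def Qch (n : ℕ) (ℓ V a q : ℝ) : ℝ :=
  Xi ℓ a * V / (4 * Real.pi) * Real.sqrt (((n : ℝ) - 1) * ((n : ℝ) - 2) / 2) * q

noncomputable def Temp (n : ℕ) (ℓ r a q : ℝ) : ℝ :=
  ((n : ℝ) * r ^ (2 * n - 2) - ((n : ℝ) - 2) * q ^ 2 * ℓ ^ 2) /
    (4 * Real.pi * ℓ ^ 2 * Xi ℓ a * r ^ (2 * n - 3))

noncomputable def Omg (ℓ a : ℝ) : ℝ := a / (Xi ℓ a * ℓ ^ 2)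

noncomputable def Pot (n : ℕ) (ℓ r a q : ℝ) : ℝ :=
  Real.sqrt (((n : ℝ) - 1) / (2 * ((n : ℝ) - 2))) * q / (Xi ℓ a * r ^ (n - 2))

lemma Xi_sq (ℓ a : ℝ) : Xi ℓ a ^ 2 = 1 + a ^ 2 / ℓ ^ 2 :=
  Real.sq_sqrt (by positivity)

lemma Xi_pos (ℓ a : ℝ) : 0 < Xi ℓ a :=
  Real.sqrt_pos.mpr (by positivity)

lemma Mmass_sub_Omg_mul_Jang (n : ℕ) (ℓ V r a q : ℝ) :
    Mmass n ℓ V r a q - Omg ℓ a * Jang n ℓ V r a q =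
      V / (16 * Real.pi) * ((n : ℝ) - 1) * mMass n ℓ r q := by
  unfold Mmass Omg Jang
  rw [Xi_sq]
  field_simp [(Xi_pos ℓ a).ne']
  ring

lemma mMass_eq_div {n : ℕ} (hn : 2 ≤ n) {ℓ r : ℝ} (hℓ : ℓ ≠ 0) (hr : r ≠ 0) (q : ℝ) :
    mMass n ℓ r q = (r ^ (2 * n - 2) + q ^ 2 * ℓ ^ 2) / (ℓ ^ 2 * r ^ (n - 2)) := by
  have hpow : r ^ (2 * n - 2) = r ^ n * r ^ (n - 2) := by
    rw [← pow_add]; congr 1; omega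
  unfold mMass
  rw [hpow]
  field_simp

lemma Temp_mul_Sent {n : ℕ} (hn : 2 ≤ n) (ℓ V : ℝ) {r : ℝ} (hr : r ≠ 0) (a q : ℝ) :
    Temp n ℓ r a q * Sent n ℓ V r a =
      V / (16 * Real.pi) * ((n : ℝ) * r ^ (2 * n - 2) - ((n : ℝ) - 2) * q ^ 2 * ℓ ^ 2) /
        (ℓ ^ 2 * r ^ (n - 2)) := by
  have hpow : r ^ (2 * n - 3) = r ^ (n - 1) * r ^ (n - 2) := by
    rw [← pow_add]; congr 1; omega
  unfold Temp Sent
  rw [hpow]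
  field_simp [(Xi_pos ℓ a).ne']
  ring

theorem black_brane_helmholtz_legendre_general
    (n : ℕ) (hn : 3 ≤ n) (ℓ V rp a q : ℝ)
    (hℓ : 0 < ℓ) (hrp : 0 < rp) :
    -(V / (16 * Real.pi)) * (rp ^ (2 * n - 2) - (2 * (n : ℝ) - 3) * q ^ 2 * ℓ ^ 2) /
        (rp ^ (n - 2) * ℓ ^ 2) + Omg ℓ a * Jang n ℓ V rp a q =
      Mmass n ℓ V rp a q - Temp n ℓ rp a q * Sent n ℓ V rp a := by
  have hn2 : 2 ≤ n := by omega
  have hM := Mmass_sub_Omg_mul_Jang n ℓ V rp a q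
  rw [mMass_eq_div hn2 hℓ.ne' hrp.ne'] at hM
  rw [Temp_mul_Sent hn2 ℓ V hrp.ne']
  linear_combination -hM

/-- with the canonical-ensemble Euclidean action
Ĩ = −(βV/16π)·(r₊^{2n−2} − (2n−3)q²ℓ²)/(r₊^{n−2}ℓ²), the Helmholtz free
energy F = Ĩ/β + ΩJ satisfies F = M − TS as an identity among the explicit
functions of (r₊, a, q). -/
theorem black_brane_helmholtz_legendre
    (n : ℕ) (hn : 3 ≤ n) (ℓ V rp a q : ℝ)
    (hℓ : 0 < ℓ) (hV : 0 < V) (hrp : 0 < rp)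
    (hT : 0 < Temp n ℓ rp a q) :
    -(V / (16 * Real.pi)) * (rp ^ (2 * n - 2) - (2 * (n : ℝ) - 3) * q ^ 2 * ℓ ^ 2) /
        (rp ^ (n - 2) * ℓ ^ 2) + Omg ℓ a * Jang n ℓ V rp a q =
      Mmass n ℓ V rp a q - Temp n ℓ rp a q * Sent n ℓ V rp a :=
  black_brane_helmholtz_legendre_general n hn ℓ V rp a q hℓ hrp
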